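/- Let m ≥ 1 and suppose P, P' ∈ ℝ[X] satisfy P·D_mᴺ = Q_mᴺ and P'·D_{m+1}ᴺ = Q_{m+1}ᴺ. Then P has exactly 2^m distinct real roots λ_{m,1} < λ_{m,2} < … < λ_{m,2^m} with λ_{m,1} = 0, λ_{m,2^m−1} < 5, and λ_{m,2^m} = 6, and P' has exactly 2^{m+1} distinct real roots λ_{m+1,1} < … < λ_{m+1,2^{m+1}} with the analogous properties. Moreover φ₋(λ_{m,k−1}) < λ_{m+1,k} < φ₋(λ_{m,k}) for all 2 ≤ k ≤ 2^m, and φ₊(λ_{m,2^{m+1}−k+1}) < λ_{m+1,k} < φ₊(λ_{m,2^{m+1}−k}) for all 2^m+1 ≤ k ≤ 2^{m+1}−1. -/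

import Mathlib

open Function

noncomputable section

/-- The polynomial map `f(x) = x(5-x)`. -/
def f (x : ℝ) : ℝ := x * (5 - x)

/-- `l(x) = x - 6`. -/
def lf (x : ℝ) : ℝ := x - 6

/-- `s(x) = (2-x)(4-x)(5-x) - (14-3x)`. -/
def sf (x : ℝ) : ℝ := (2 - x) * (4 - x) * (5 - x) - (14 - 3 * x)

/-- `r(x) = -2(2-x)(5-x)`. -/
def rf (x : ℝ) : ℝ := -2 * (2 - x) * (5 - x)

/-- The decreasing inverse branch of `f`. -/
def phim (x : ℝ) : ℝ := (5 - Real.sqrt (25 - 4 * x)) / 2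

/-- The increasing inverse branch of `f`. -/
def phip (x : ℝ) : ℝ := (5 + Real.sqrt (25 - 4 * x)) / 2

/-- `ltN m` is the auxiliary function `l̃_m` from the paper, meaningful for `m ≥ 1`
(the value at `m = 0` is a junk value `1`). -/
def ltN : ℕ → ℝ → ℝ
  | 0, _ => 1
  | 1, x => 4 - x
  | 2, x => (4 - f x) * sf x + 4 * lf x
  | m + 3, x => sf x * ltN (m + 2) (f x) - rf (f x) * lf x * ltN (m + 1) (f (f x))

/-- `qN m` is the function `q_mᴺ` from the paper, meaningful for `m ≥ 1`. -/
def qN (m : ℕ) (x : ℝ) : ℝ :=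
  if m = 1 then x ^ 2 - 6 * x
  else (2 - x) * ltN m x - 4 * (2 - x) * (5 - x) * ltN (m - 1) (f x)

open Polynomial

/-- The polynomial `F = 5X - X²`. -/
def F : ℝ[X] := C 5 * X - X ^ 2

/-- `Fiter i` is the `i`-fold composition `F^{(i)}`, with `Fiter 0 = X`. -/
def Fiter : ℕ → ℝ[X]
  | 0 => X
  | i + 1 => F.comp (Fiter i)

/-- Polynomial version of `l`. -/
def Lp : ℝ[X] := X - C 6

/-- Polynomial version of `s`. -/
def Sp : ℝ[X] := (C 2 - X) * (C 4 - X) * (C 5 - X) - (C 14 - C 3 * X)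

/-- Polynomial version of `r`. -/
def Rp : ℝ[X] := -C 2 * (C 2 - X) * (C 5 - X)

/-- Polynomial version of `l̃_m`. -/
def LtP : ℕ → ℝ[X]
  | 0 => 1
  | 1 => C 4 - X
  | 2 => (C 4 - F) * Sp + C 4 * Lp
  | m + 3 => Sp * (LtP (m + 2)).comp F - Rp.comp F * Lp * (LtP (m + 1)).comp (F.comp F)

/-- `QpN m` is the polynomial `Q_mᴺ`, satisfying `(QpN m).eval x = q_mᴺ x`. -/
def QpN (m : ℕ) : ℝ[X] :=
  if m = 1 then X ^ 2 - C 6 * X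
  else (C 2 - X) * LtP m - C 4 * (C 2 - X) * (C 5 - X) * ((LtP (m - 1)).comp F)

/-- `DpN m = ∏_{i=0}^{m-2} (F^{(i)} - 2)(F^{(i)} - 5)`, with `DpN 1 = 1`. -/
def DpN (m : ℕ) : ℝ[X] := ∏ i ∈ Finset.range (m - 1), ((Fiter i - C 2) * (Fiter i - C 5))

/-!
Write `H_m` for `Hp m`: `H_0 = 0`, `H_1 = 1`, `H_{m+2} = (5 - X) H_{m+1}(F) + (2X - 6) H_m(F ∘ F)`.
Then `Q_mᴺ = X (X - 6) H_m(F) D_mᴺ`, and `H_{m+1}` has degree at most `2^m - 1`, so the roots of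
`P` are `0`, `6` and the two preimages `φ₋(μ) < φ₊(μ)` under `f` of each root `μ` of `H_m`.

By induction on `m`, `H_{m+1}` has `2^m - 1` simple roots in `(0, 6)`. At a preimage `x` of a
root of `H_{m+1}` the recursion collapses to `H_{m+2}(x) = (2x - 6) H_m(f x)`; knowing the sign
of `H_m` at the images under `f` of the roots of `H_{m+1}`, this shows that `H_{m+2}` alternates
in sign along the `2^{m+1}` roots of `X (X - 6) H_{m+1}(F)`. The intermediate value theorem and
the degree bound then put exactly one root of `H_{m+2}` in each of the `2^{m+1} - 1` gaps, and the
interlacing of the roots of `P` and `P'` is this statement pulled back through the monotone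
branches `φ₋` and `φ₊`.
-/

open Set

def Hp : ℕ → ℝ[X]
  | 0 => 0
  | 1 => 1
  | m + 2 => (C 5 - X) * (Hp (m + 1)).comp F + (C 2 * X - C 6) * (Hp m).comp (F.comp F)

lemma Fiter_comp_F (i : ℕ) : (Fiter i).comp F = Fiter (i + 1) := by
  induction i with
  | zero => simp [Fiter]
  | succ i ih => rw [Fiter, Polynomial.comp_assoc, ih]; rfl

lemma DpN_succ {m : ℕ} (hm : 1 ≤ m) :
    DpN (m + 1) = (X - C 2) * (X - C 5) * (DpN m).comp F := by
  obtain ⟨m, rfl⟩ := Nat.exists_eq_add_of_le' hm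
  have hfactor (i : ℕ) : (Fiter (i + 1) - C 2) * (Fiter (i + 1) - C 5) =
      ((Fiter i - C 2) * (Fiter i - C 5)).comp F := by
    rw [mul_comp, sub_comp, sub_comp, C_comp, C_comp, Fiter_comp_F]
  rw [DpN, DpN, Nat.add_sub_cancel, Nat.add_sub_cancel, Finset.prod_range_succ']
  simp only [hfactor]
  rw [← Polynomial.prod_comp, Fiter, mul_comm]

lemma QpN_succ {m : ℕ} (hm : 1 ≤ m) :
    QpN (m + 1) = (C 2 - X) * LtP (m + 1) - C 4 * (C 2 - X) * (C 5 - X) * (LtP m).comp F := by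
  rw [QpN, if_neg (by omega), Nat.add_sub_cancel]

lemma two_mul_QpN_succ {m : ℕ} (hm : 1 ≤ m) :
    C 2 * QpN (m + 1) = (C 2 - X) * (X - C 6) * (X * LtP m - QpN m).comp F := by
  rw [QpN_succ hm]
  obtain rfl | ⟨m, rfl⟩ : m = 1 ∨ ∃ k, m = k + 2 := by rcases m with _ | _ | k <;> simp_all
  · simp only [QpN, LtP, F, Sp, Lp, if_true, sub_comp, mul_comp, X_comp, C_comp, pow_comp]
    simp only [map_ofNat]
    ring
  · rw [QpN, if_neg (by omega), show m + 2 - 1 = m + 1 from rfl]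
    simp only [LtP, F, Sp, Lp, Rp, sub_comp, mul_comp, X_comp, C_comp,
      pow_comp, neg_comp, Polynomial.comp_assoc]
    simp only [map_ofNat]
    ring

lemma X_mul_LtP_sub_QpN_succ {m : ℕ} (hm : 1 ≤ m) :
    X * LtP (m + 1) - QpN (m + 1) =
      (C 2 - X) * (C 5 - X) * (X * LtP m - QpN m).comp F + C 4 * (QpN m).comp F := by
  rw [QpN_succ hm]
  obtain rfl | ⟨m, rfl⟩ : m = 1 ∨ ∃ k, m = k + 2 := by rcases m with _ | _ | k <;> simp_all
  · simp only [QpN, LtP, F, Sp, Lp, if_true, sub_comp, mul_comp, X_comp, C_comp, pow_comp]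
    simp only [map_ofNat]
    ring
  · rw [QpN, if_neg (by omega), show m + 2 - 1 = m + 1 from rfl]
    simp only [LtP, F, Sp, Lp, Rp, sub_comp, mul_comp, X_comp, C_comp,
      pow_comp, neg_comp, Polynomial.comp_assoc]
    simp only [map_ofNat]
    ring

lemma X_mul_LtP_sub_QpN_eq_and_QpN_eq {m : ℕ} (hm : 1 ≤ m) :
    X * LtP m - QpN m = C 2 * X * Hp (m + 1) * DpN m ∧
      QpN m = X * (X - C 6) * (Hp m).comp F * DpN m := by
  induction m, hm using Nat.le_induction with
  | base =>
    simp only [QpN, LtP, DpN, Hp, if_true, Nat.sub_self, Finset.range_zero, Finset.prod_empty,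
      one_comp, zero_comp, map_ofNat]
    constructor <;> ring
  | succ m hm ih =>
    have hQ : QpN (m + 1) = X * (X - C 6) * (Hp (m + 1)).comp F * DpN (m + 1) := by
      refine mul_left_cancel₀ (C_ne_zero.mpr two_ne_zero) ?_
      rw [two_mul_QpN_succ hm, ih.1, DpN_succ hm]
      simp only [F, mul_comp, C_comp, X_comp]
      simp only [map_ofNat]
      ring
    refine ⟨?_, hQ⟩
    rw [X_mul_LtP_sub_QpN_succ hm, ih.1, ih.2, DpN_succ hm, Hp]
    simp only [F, mul_comp, C_comp, X_comp, sub_comp, pow_comp, Polynomial.comp_assoc]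
    simp only [map_ofNat]
    ring

lemma QpN_eq {m : ℕ} (hm : 1 ≤ m) : QpN m = X * (X - C 6) * (Hp m).comp F * DpN m :=
  (X_mul_LtP_sub_QpN_eq_and_QpN_eq hm).2

lemma Fiter_eval_zero (i : ℕ) : (Fiter i).eval 0 = 0 := by
  induction i with
  | zero => simp [Fiter]
  | succ i ih => simp [Fiter, ih, F]

lemma DpN_ne_zero (m : ℕ) : DpN m ≠ 0 := fun h => by
  simpa [DpN, eval_prod, Fiter_eval_zero, Finset.prod_eq_zero_iff] using
    congrArg (Polynomial.eval 0) h

lemma eval_F (x : ℝ) : F.eval x = f x := by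
  simp only [F, f, eval_sub, eval_mul, eval_C, eval_X, eval_pow]
  ring

lemma eval_of_mul_DpN {m : ℕ} (hm : 1 ≤ m) {P : ℝ[X]} (hP : P * DpN m = QpN m) (x : ℝ) :
    P.eval x = x * (x - 6) * (Hp m).eval (f x) := by
  rw [mul_right_cancel₀ (DpN_ne_zero m) (hP.trans (QpN_eq hm))]
  simp [eval_comp, eval_F]

lemma eval_Hp_add_two (m : ℕ) (x : ℝ) : (Hp (m + 2)).eval x =
    (5 - x) * (Hp (m + 1)).eval (f x) + (2 * x - 6) * (Hp m).eval (f (f x)) := by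
  simp [Hp, eval_comp, eval_F]

lemma natDegree_Hp_succ_le : ∀ m : ℕ, (Hp (m + 1)).natDegree ≤ 2 ^ m - 1
  | 0 => by simp [Hp]
  | m + 1 => by
    have hF : F.natDegree = 2 := by unfold F; compute_degree!
    have hlin₁ : (C 5 - X : ℝ[X]).natDegree ≤ 1 := by compute_degree
    have hlin₂ : (C 2 * X - C 6 : ℝ[X]).natDegree ≤ 1 := by compute_degree
    have h1 := natDegree_Hp_succ_le m
    have h0 : (Hp m).natDegree * 4 + 1 ≤ 2 * 2 ^ m - 1 := by
      cases m with
      | zero => simp [Hp]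
      | succ m =>
        have := natDegree_Hp_succ_le m
        have := Nat.one_le_two_pow (n := m)
        rw [pow_succ]
        omega
    have hpos := Nat.one_le_two_pow (n := m)
    rw [Hp, pow_succ]
    refine (natDegree_add_le _ _).trans (max_le ?_ ?_) <;> refine natDegree_mul_le.trans ?_ <;>
      simp only [natDegree_comp, hF] <;> omega

lemma eval_Hp_zero (m : ℕ) : (Hp m).eval 0 = 3 ^ m - 2 ^ m := by
  induction m using Nat.twoStepInduction with
  | zero => simp [Hp]
  | one => simp [Hp]; norm_num
  | more m ih0 ih1 =>
    simp only [eval_Hp_add_two, show f 0 = 0 by simp [f], ih0, ih1]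
    ring

lemma f_le_neg_six {y : ℝ} (hy : y ≤ -6) : f y ≤ -6 := by unfold f; nlinarith

/-- On `(-∞, -6]`, which `f` maps into itself, the growth bound drives the positivity. -/
lemma eval_Hp_pos_and_growth (m : ℕ) : ∀ y ≤ -6,
    0 < (Hp (m + 1)).eval y ∧ (3 - y) * (Hp (m + 1)).eval (f y) ≤ (Hp (m + 2)).eval y := by
  induction m with
  | zero => intro y hy; simp [Hp]; linarith
  | succ m ih =>
    intro y hy
    have hfy := f_le_neg_six hy
    have hpos (z : ℝ) (hz : z ≤ -6) : 0 < (Hp (m + 2)).eval z := by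
      nlinarith [ih z hz, (ih (f z) (f_le_neg_six hz)).1]
    refine ⟨hpos y hy, ?_⟩
    have hgrowth := (ih (f y) hfy).2
    have hff := (ih (f (f y)) (f_le_neg_six hfy)).1
    rw [eval_Hp_add_two (m + 1) y]
    nlinarith [hpos (f y) hfy, show y - f y = y ^ 2 - 4 * y by unfold f; ring]

lemma eval_Hp_six_neg (m : ℕ) : (Hp (m + 2)).eval 6 < 0 := by
  rw [eval_Hp_add_two, show f 6 = -6 by norm_num [f], show f (-6) = -66 by norm_num [f]]
  cases m with
  | zero => norm_num [Hp]
  | succ m =>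
    have := eval_Hp_pos_and_growth m (-6) (by norm_num)
    rw [show f (-6) = -66 by norm_num [f]] at this
    nlinarith [(eval_Hp_pos_and_growth m (-66) (by norm_num)).1]

section Branches

variable {s t y : ℝ}

lemma f_sub_eq (ht : t ≤ 25 / 4) (y : ℝ) : f y - t = -((y - phim t) * (y - phip t)) := by
  have hs : Real.sqrt (25 - 4 * t) ^ 2 = 25 - 4 * t := Real.sq_sqrt (by linarith)
  unfold f phim phip
  linear_combination (-1 / 4 : ℝ) * hs

lemma f_phim (ht : t ≤ 25 / 4) : f (phim t) = t :=
  sub_eq_zero.mp (by rw [f_sub_eq ht, sub_self, zero_mul, neg_zero])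

lemma f_phip (ht : t ≤ 25 / 4) : f (phip t) = t :=
  sub_eq_zero.mp (by rw [f_sub_eq ht, sub_self, mul_zero, neg_zero])

lemma phim_le (t : ℝ) : phim t ≤ 5 / 2 := by
  unfold phim; linarith [Real.sqrt_nonneg (25 - 4 * t)]

lemma le_phip (t : ℝ) : 5 / 2 ≤ phip t := by
  unfold phip; linarith [Real.sqrt_nonneg (25 - 4 * t)]

lemma phim_lt_phip (ht : t < 25 / 4) : phim t < phip t := by
  have : 0 < Real.sqrt (25 - 4 * t) := Real.sqrt_pos.mpr (by linarith)
  unfold phim phip; linarith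

lemma sqrt_disc_lt_five (h0 : 0 < t) : Real.sqrt (25 - 4 * t) < 5 :=
  (Real.sqrt_lt' (by norm_num)).mpr (by linarith)

lemma phim_pos (h0 : 0 < t) : 0 < phim t := by
  unfold phim; linarith [sqrt_disc_lt_five h0]

lemma phip_lt_five (h0 : 0 < t) : phip t < 5 := by
  unfold phip; linarith [sqrt_disc_lt_five h0]

lemma three_lt_phip (ht : t < 6) : 3 < phip t := by
  have : 1 < Real.sqrt (25 - 4 * t) := (Real.lt_sqrt zero_le_one).mpr (by linarith)
  unfold phip; linarith

lemma sqrt_disc_lt_sqrt_disc (h : s < t) (ht : t ≤ 25 / 4) :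
    Real.sqrt (25 - 4 * t) < Real.sqrt (25 - 4 * s) :=
  Real.sqrt_lt_sqrt (by linarith) (by linarith)

lemma phim_lt_phim (h : s < t) (ht : t ≤ 25 / 4) : phim s < phim t := by
  unfold phim; linarith [sqrt_disc_lt_sqrt_disc h ht]

lemma phip_lt_phip (h : s < t) (ht : t ≤ 25 / 4) : phip t < phip s := by
  unfold phip; linarith [sqrt_disc_lt_sqrt_disc h ht]

lemma lt_f_of_mem_Ioo (ht : t ≤ 25 / 4) (hy : y ∈ Ioo (phim t) (phip t)) : t < f y := by
  have := f_sub_eq ht y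
  nlinarith [hy.1, hy.2]

lemma f_lt_of_lt_phim (ht : t ≤ 25 / 4) (hy : y < phim t) : f y < t := by
  have := f_sub_eq ht y
  nlinarith [phim_le t, le_phip t]

lemma f_lt_of_phip_lt (ht : t ≤ 25 / 4) (hy : phip t < y) : f y < t := by
  have := f_sub_eq ht y
  nlinarith [phim_le t, le_phip t]

end Branches

lemma pos_of_pos_of_forall_ne_zero {g : ℝ → ℝ} (hg : Continuous g) {S : Set ℝ}
    (hS : S.OrdConnected) {a z : ℝ} (ha : a ∈ S) (hz : z ∈ S) (hga : 0 < g a)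
    (hne : ∀ t ∈ S, g t ≠ 0) : 0 < g z := by
  by_contra! hgz
  obtain ⟨t, ht, hgt⟩ := intermediate_value_uIcc hg.continuousOn
    (show (0 : ℝ) ∈ uIcc (g a) (g z) from mem_uIcc.mpr (Or.inr ⟨hgz, hga.le⟩))
  exact hne t (hS.uIcc_subset ha hz ht) hgt

lemma exists_mem_Ioo_eval_eq_zero {p : ℝ[X]} {a b : ℝ} (hab : a < b)
    (hsign : p.eval a * p.eval b < 0) : ∃ c ∈ Ioo a b, p.eval c = 0 := by
  rcases lt_or_gt_of_ne (left_ne_zero_of_mul hsign.ne) with ha | ha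
  · exact intermediate_value_Ioo hab.le p.continuous.continuousOn
      ⟨ha, pos_of_mul_neg_right hsign ha.le⟩
  · exact intermediate_value_Ioo' hab.le p.continuous.continuousOn
      ⟨neg_of_mul_neg_right hsign ha.le, ha⟩

lemma Polynomial.exists_mem_eq_of_isRoot {R ι : Type*} [CommRing R] [IsDomain R] {p : R[X]}
    (hp : p ≠ 0) {s : Finset ι} {y : ι → R} (hinj : InjOn y s) (hroot : ∀ i ∈ s, p.IsRoot (y i))
    (hdeg : p.natDegree ≤ s.card) {z : R} (hz : p.IsRoot z) : ∃ i ∈ s, y i = z := by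
  classical
  have hsub : s.image y ⊆ p.roots.toFinset := by
    simp only [Finset.image_subset_iff, Multiset.mem_toFinset, mem_roots hp]
    exact hroot
  have hcard : p.roots.toFinset.card ≤ (s.image y).card := by
    rw [Finset.card_image_of_injOn hinj]
    exact (Multiset.toFinset_card_le _).trans ((card_roots' p).trans hdeg)
  have hz' : z ∈ s.image y := by
    rw [Finset.eq_of_subset_of_card_le hsub hcard, Multiset.mem_toFinset, mem_roots hp]
    exact hz
  simpa using hz'

/-- The open interval between `y k` and `y (k + 1)`, where `y 0 = -∞` and `y (n + 1) = +∞`. -/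
def gap (y : ℕ → ℝ) (n k : ℕ) : Set ℝ :=
  {z | (1 ≤ k → y k < z) ∧ (k + 1 ≤ n → z < y (k + 1))}

lemma ordConnected_gap (y : ℕ → ℝ) (n k : ℕ) : (gap y n k).OrdConnected :=
  ⟨fun _ ha _ hb _ hz => ⟨fun hk => (ha.1 hk).trans_le hz.1, fun hk => hz.2.trans_lt (hb.2 hk)⟩⟩

lemma apply_notMem_gap {y : ℕ → ℝ} {n : ℕ} (hy : StrictMonoOn y (Icc 1 n)) {j k : ℕ}
    (hj : j ∈ Icc 1 n) (hk : k ≤ n) : y j ∉ gap y n k := by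
  rintro ⟨hlow, hup⟩
  rcases le_or_gt j k with hjk | hjk
  · exact (hlow (hj.1.trans hjk)).not_ge (hy.monotoneOn hj ⟨hj.1.trans hjk, hk⟩ hjk)
  · exact (hup (hjk.trans_le hj.2)).not_ge (hy.monotoneOn ⟨by omega, hjk.trans_le hj.2⟩ hj hjk)

lemma mul_neg_of_alternating {a b : ℝ} (k : ℕ) (ha : 0 < (-1) ^ k * a)
    (hb : 0 < (-1) ^ (k + 1) * b) : a * b < 0 := by
  rcases neg_one_pow_eq_or ℝ k with h | h <;> simp only [pow_succ, h] at ha hb <;> nlinarith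

theorem exists_interlacing_roots {p : ℝ[X]} {n : ℕ} (hdeg : p.natDegree ≤ n) {x : ℕ → ℝ}
    (hx : ∀ k ∈ Icc 1 n, x k < x (k + 1))
    (hsign : ∀ k ∈ Icc 1 (n + 1), 0 < (-1) ^ (k - 1) * p.eval (x k)) :
    ∃ y : ℕ → ℝ, (∀ k ∈ Icc 1 n, y k ∈ Ioo (x k) (x (k + 1))) ∧ StrictMonoOn y (Icc 1 n) ∧
      (∀ z, p.eval z = 0 ↔ ∃ k ∈ Icc 1 n, y k = z) ∧
      ∀ k ≤ n, ∀ z ∈ gap y n k, 0 < (-1) ^ k * p.eval z := by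
  have hroot (k : ℕ) : ∃ c, k ∈ Icc 1 n → c ∈ Ioo (x k) (x (k + 1)) ∧ p.eval c = 0 := by
    by_cases hk : k ∈ Icc 1 n
    · obtain ⟨hk1, hkn⟩ := hk
      have hprod := mul_neg_of_alternating (k - 1) (hsign k ⟨hk1, by omega⟩)
        (by simpa [Nat.sub_add_cancel hk1] using hsign (k + 1) ⟨by omega, by omega⟩)
      obtain ⟨c, hc, hc0⟩ := exists_mem_Ioo_eval_eq_zero (hx k ⟨hk1, hkn⟩) hprod
      exact ⟨c, fun _ => ⟨hc, hc0⟩⟩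
    · exact ⟨0, fun h => absurd h hk⟩
  choose y hy using hroot
  have hmono : StrictMonoOn y (Icc 1 n) := strictMonoOn_of_lt_add_one ordConnected_Icc
    fun k _ hk hk1 => (hy k hk).1.2.trans (hy (k + 1) hk1).1.1
  have hp : p ≠ 0 := fun h => by simpa [h] using hsign 1 ⟨le_rfl, by omega⟩
  have hroots (z : ℝ) : p.eval z = 0 ↔ ∃ k ∈ Icc 1 n, y k = z := by
    refine ⟨fun hz => ?_, fun ⟨k, hk, hkz⟩ => hkz ▸ (hy k hk).2⟩
    obtain ⟨k, hk, hkz⟩ := exists_mem_eq_of_isRoot hp (s := Finset.Icc 1 n)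
      (by simpa using hmono.injOn) (fun k hk => (hy k (by simpa using hk)).2)
      (by simpa using hdeg) hz
    exact ⟨k, by simpa using hk, hkz⟩
  refine ⟨y, fun k hk => (hy k hk).1, hmono, hroots, fun k hk z hz => ?_⟩
  -- `p` has no root in the gap, and the sign of `p` at the point `x (k + 1)` of the gap is known.
  have hxgap : x (k + 1) ∈ gap y n k :=
    ⟨fun h1 => (hy k ⟨h1, hk⟩).1.2, fun h2 => (hy (k + 1) ⟨by omega, h2⟩).1.1⟩
  refine pos_of_pos_of_forall_ne_zero (continuous_const.mul p.continuous) (ordConnected_gap y n k)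
    hxgap hz (by simpa using hsign (k + 1) ⟨by omega, by omega⟩) fun t ht ht0 => ?_
  obtain ⟨j, hj, rfl⟩ := (hroots t).mp (by simpa using ht0)
  exact apply_notMem_gap hmono hj hk ht

/-- `sign_prev` is what fixes the sign of `Hp (m + 2)` at the preimages of the `μ k` under `f`. -/
structure RootPattern (m : ℕ) (μ : ℕ → ℝ) : Prop where
  strictMonoOn : StrictMonoOn μ (Icc 1 (2 ^ m - 1))
  mem_Ioo : ∀ k ∈ Icc 1 (2 ^ m - 1), μ k ∈ Ioo 0 6
  eval_eq_zero_iff : ∀ z, (Hp (m + 1)).eval z = 0 ↔ ∃ k ∈ Icc 1 (2 ^ m - 1), μ k = z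
  sign_gap : ∀ k ≤ 2 ^ m - 1, ∀ z ∈ gap μ (2 ^ m - 1) k, 0 < (-1) ^ k * (Hp (m + 1)).eval z
  sign_prev : ∀ k ∈ Icc 1 (2 ^ m - 1), 0 < (-1) ^ (k - 1) * (Hp m).eval (f (μ k))

lemma rootPattern_zero (μ : ℕ → ℝ) : RootPattern 0 μ where
  strictMonoOn _ ha := by simp at ha
  mem_Ioo := by simp
  eval_eq_zero_iff := by simp [Hp]
  sign_gap := by simp [Hp]
  sign_prev := by simp

/-- The paper's `λ_{m+1,k}`, when `μ` enumerates the roots of `Hp (m + 1)`. -/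
def lamOf (m : ℕ) (μ : ℕ → ℝ) (k : ℕ) : ℝ :=
  if k ≤ 1 then 0
  else if k ≤ 2 ^ m then phim (μ (k - 1))
  else if k < 2 ^ (m + 1) then phip (μ (2 ^ (m + 1) - k))
  else 6

section lamOf

variable {m : ℕ} {μ : ℕ → ℝ} {k : ℕ}

lemma lamOf_one : lamOf m μ 1 = 0 := by simp [lamOf]

lemma lamOf_two_pow_succ : lamOf m μ (2 ^ (m + 1)) = 6 := by
  have : 2 ^ m < 2 ^ (m + 1) := Nat.pow_lt_pow_succ one_lt_two
  simp [lamOf, this.not_ge]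

lemma lamOf_of_le (h2 : 2 ≤ k) (hk : k ≤ 2 ^ m) : lamOf m μ k = phim (μ (k - 1)) := by
  simp [lamOf, show ¬k ≤ 1 by omega, hk]

lemma lamOf_of_lt (hk : 2 ^ m < k) (hk' : k < 2 ^ (m + 1)) :
    lamOf m μ k = phip (μ (2 ^ (m + 1) - k)) := by
  simp [lamOf, show ¬k ≤ 1 by have := Nat.one_le_two_pow (n := m); omega, hk.not_ge, hk']

lemma lamOf_cases (hk : k ∈ Icc 1 (2 ^ (m + 1))) :
    k = 1 ∨ (∃ j ∈ Icc 1 (2 ^ m - 1), k = j + 1 ∧ lamOf m μ k = phim (μ j)) ∨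
      (∃ j ∈ Icc 1 (2 ^ m - 1), k = 2 ^ (m + 1) - j ∧ lamOf m μ k = phip (μ j)) ∨
      k = 2 ^ (m + 1) := by
  obtain ⟨hk1, hk2⟩ := hk
  have hpow : 2 ^ (m + 1) = 2 * 2 ^ m := pow_succ' 2 m
  by_cases h1 : k = 1
  · exact Or.inl h1
  by_cases hlow : k ≤ 2 ^ m
  · exact Or.inr (Or.inl ⟨k - 1, ⟨by omega, by omega⟩, by omega, lamOf_of_le (by omega) hlow⟩)
  by_cases htop : k = 2 ^ (m + 1)
  · exact Or.inr (Or.inr (Or.inr htop))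
  exact Or.inr (Or.inr (Or.inl ⟨2 ^ (m + 1) - k, ⟨by omega, by omega⟩, by omega,
    lamOf_of_lt (by omega) (by omega)⟩))

end lamOf

namespace RootPattern

variable {m : ℕ} {μ : ℕ → ℝ} (hμ : RootPattern m μ)
include hμ

lemma le_25_div_4 {k : ℕ} (hk : k ∈ Icc 1 (2 ^ m - 1)) : μ k ≤ 25 / 4 :=
  (hμ.mem_Ioo k hk).2.le.trans (by norm_num)

lemma lamOf_lt_lamOf_succ {k : ℕ} (hk : k ∈ Icc 1 (2 ^ (m + 1) - 1)) :
    lamOf m μ k < lamOf m μ (k + 1) := by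
  obtain ⟨hk1, hk2⟩ := hk
  have hpow : 2 ^ (m + 1) = 2 * 2 ^ m := pow_succ' 2 m
  have hpos := Nat.one_le_two_pow (n := m)
  have hmem {j : ℕ} (h1 : 1 ≤ j) (h2 : j ≤ 2 ^ m - 1) : j ∈ Icc 1 (2 ^ m - 1) := ⟨h1, h2⟩
  rcases Nat.lt_or_ge k 2 with hk | hk
  · obtain rfl : k = 1 := by omega
    rcases Nat.lt_or_ge 1 (2 ^ m) with hm | hm
    · rw [lamOf_one, lamOf_of_le le_rfl hm]
      exact phim_pos (hμ.mem_Ioo 1 (hmem le_rfl (by omega))).1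
    · rw [lamOf_one, show 1 + 1 = 2 ^ (m + 1) by omega, lamOf_two_pow_succ]
      norm_num
  rcases Nat.lt_or_ge k (2 ^ m) with hlow | hhigh
  · rw [lamOf_of_le hk hlow.le, lamOf_of_le (by omega) (show k + 1 ≤ 2 ^ m by omega),
      Nat.add_sub_cancel]
    exact phim_lt_phim (hμ.strictMonoOn (hmem (by omega) (by omega)) (hmem (by omega) (by omega))
      (by omega)) (hμ.le_25_div_4 (hmem (by omega) (by omega)))
  rcases Nat.eq_or_lt_of_le hhigh with rfl | hhigh
  · rw [lamOf_of_le hk le_rfl, lamOf_of_lt (by omega) (by omega),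
      show 2 ^ (m + 1) - (2 ^ m + 1) = 2 ^ m - 1 by omega]
    exact phim_lt_phip ((hμ.mem_Ioo _ (hmem (by omega) le_rfl)).2.trans (by norm_num))
  rcases Nat.lt_or_ge (k + 1) (2 ^ (m + 1)) with htop | htop
  · rw [lamOf_of_lt hhigh (by omega), lamOf_of_lt (by omega) htop]
    exact phip_lt_phip (hμ.strictMonoOn (hmem (by omega) (by omega))
      (hmem (by omega) (by omega)) (by omega)) (hμ.le_25_div_4 (hmem (by omega) (by omega)))
  · rw [lamOf_of_lt hhigh (by omega), show k + 1 = 2 ^ (m + 1) by omega, lamOf_two_pow_succ]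
    exact (phip_lt_five (hμ.mem_Ioo _ (hmem (by omega) (by omega))).1).trans (by norm_num)

lemma strictMonoOn_lamOf : StrictMonoOn (lamOf m μ) (Icc 1 (2 ^ (m + 1))) :=
  strictMonoOn_of_lt_add_one ordConnected_Icc fun k _ hk hk1 =>
    hμ.lamOf_lt_lamOf_succ ⟨hk.1, by have := hk1.2; omega⟩

lemma lamOf_mem_Icc {k : ℕ} (hk : k ∈ Icc 1 (2 ^ (m + 1))) : lamOf m μ k ∈ Icc 0 6 := by
  have hmono := hμ.strictMonoOn_lamOf.monotoneOn
  have h1 : 1 ∈ Icc 1 (2 ^ (m + 1)) := ⟨le_rfl, Nat.one_le_two_pow⟩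
  have htop : 2 ^ (m + 1) ∈ Icc 1 (2 ^ (m + 1)) := ⟨Nat.one_le_two_pow, le_rfl⟩
  exact ⟨lamOf_one (m := m) (μ := μ) ▸ hmono h1 hk hk.1,
    lamOf_two_pow_succ (m := m) (μ := μ) ▸ hmono hk htop hk.2⟩

lemma lamOf_two_pow_succ_sub_one_lt_five : lamOf m μ (2 ^ (m + 1) - 1) < 5 := by
  rcases Nat.eq_zero_or_pos m with rfl | hm
  · norm_num [lamOf_one]
  · have : 2 ≤ 2 ^ m := Nat.le_self_pow hm.ne' 2
    have hpow : 2 ^ (m + 1) = 2 * 2 ^ m := pow_succ' 2 m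
    rw [lamOf_of_lt (by omega) (by omega), show 2 ^ (m + 1) - (2 ^ (m + 1) - 1) = 1 by omega]
    exact phip_lt_five (hμ.mem_Ioo 1 ⟨le_rfl, by omega⟩).1

lemma eval_eq_zero_iff_lamOf (x : ℝ) :
    x * (x - 6) * (Hp (m + 1)).eval (f x) = 0 ↔ ∃ k ∈ Icc 1 (2 ^ (m + 1)), lamOf m μ k = x := by
  have hpow : 2 ^ (m + 1) = 2 * 2 ^ m := pow_succ' 2 m
  constructor
  · intro hx
    rcases mul_eq_zero.mp hx with hx | hx
    · rcases mul_eq_zero.mp hx with rfl | hx6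
      · exact ⟨1, ⟨le_rfl, Nat.one_le_two_pow⟩, lamOf_one⟩
      · exact ⟨2 ^ (m + 1), ⟨Nat.one_le_two_pow, le_rfl⟩, by rw [lamOf_two_pow_succ]; linarith⟩
    · obtain ⟨j, hj, hjx⟩ := (hμ.eval_eq_zero_iff _).mp hx
      have hbranch := f_sub_eq (hμ.le_25_div_4 hj) x
      rw [← hjx, sub_self, zero_eq_neg, mul_eq_zero, sub_eq_zero, sub_eq_zero] at hbranch
      obtain ⟨hj1, hj2⟩ := hj
      rcases hbranch with h | h
      · exact ⟨j + 1, ⟨by omega, by omega⟩, by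
          rw [lamOf_of_le (by omega) (by omega), Nat.add_sub_cancel, h]⟩
      · exact ⟨2 ^ (m + 1) - j, ⟨by omega, by omega⟩, by
          rw [lamOf_of_lt (by omega) (by omega), show 2 ^ (m + 1) - (2 ^ (m + 1) - j) = j by omega,
            h]⟩
  · rintro ⟨k, hk, rfl⟩
    rcases lamOf_cases (μ := μ) hk with rfl | ⟨j, hj, -, hval⟩ | ⟨j, hj, -, hval⟩ | rfl
    · simp [lamOf_one]
    · rw [hval, f_phim (hμ.le_25_div_4 hj), (hμ.eval_eq_zero_iff _).mpr ⟨j, hj, rfl⟩, mul_zero]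
    · rw [hval, f_phip (hμ.le_25_div_4 hj), (hμ.eval_eq_zero_iff _).mpr ⟨j, hj, rfl⟩, mul_zero]
    · rw [lamOf_two_pow_succ]; ring

lemma eval_Hp_add_two_of_f_eq {j : ℕ} (hj : j ∈ Icc 1 (2 ^ m - 1)) {x : ℝ} (hx : f x = μ j) :
    (Hp (m + 2)).eval x = (2 * x - 6) * (Hp m).eval (f (μ j)) := by
  rw [eval_Hp_add_two, hx, (hμ.eval_eq_zero_iff _).mpr ⟨j, hj, rfl⟩]
  ring

lemma sign_eval_lamOf {k : ℕ} (hk : k ∈ Icc 1 (2 ^ (m + 1))) :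
    0 < (-1) ^ (k - 1) * (Hp (m + 2)).eval (lamOf m μ k) := by
  have hpow : 2 ^ (m + 1) = 2 * 2 ^ m := pow_succ' 2 m
  have hpos := Nat.one_le_two_pow (n := m)
  rcases lamOf_cases (μ := μ) hk with rfl | ⟨j, hj, rfl, hval⟩ | ⟨j, hj, rfl, hval⟩ | rfl
  · rw [lamOf_one, eval_Hp_zero, pow_zero, one_mul, sub_pos]
    exact pow_lt_pow_left₀ (by norm_num) (by norm_num) (by omega)
  · have hsign : (-1 : ℝ) ^ (j + 1 - 1) = -(-1) ^ (j - 1) := by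
      obtain ⟨i, rfl⟩ := Nat.exists_eq_add_of_le' hj.1
      simp [pow_succ]
    rw [hsign, hval, hμ.eval_Hp_add_two_of_f_eq hj (f_phim (hμ.le_25_div_4 hj))]
    have := phim_le (μ j)
    nlinarith [hμ.sign_prev j hj]
  · have hsign : (-1 : ℝ) ^ (2 ^ (m + 1) - j - 1) = (-1) ^ (j - 1) :=
      neg_one_pow_congr (by have := hj.1; have := hj.2; simp only [Nat.even_iff]; omega)
    rw [hsign, hval, hμ.eval_Hp_add_two_of_f_eq hj (f_phip (hμ.le_25_div_4 hj))]
    have := three_lt_phip (hμ.mem_Ioo j hj).2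
    nlinarith [hμ.sign_prev j hj]
  · have hsign : (-1 : ℝ) ^ (2 ^ (m + 1) - 1) = -1 :=
      Odd.neg_one_pow (Nat.odd_iff.mpr (by omega))
    rw [hsign, lamOf_two_pow_succ]
    linarith [eval_Hp_six_neg m]

lemma f_mem_gap_of_le {k : ℕ} (hk : k ∈ Icc 1 (2 ^ m)) {y : ℝ}
    (hy : y ∈ Ioo (lamOf m μ k) (lamOf m μ (k + 1))) : f y ∈ gap μ (2 ^ m - 1) (k - 1) := by
  obtain ⟨hk1, hk2⟩ := hk
  have hpow : 2 ^ (m + 1) = 2 * 2 ^ m := pow_succ' 2 m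
  constructor
  · intro h
    have hj : k - 1 ∈ Icc 1 (2 ^ m - 1) := ⟨h, by omega⟩
    have hup : lamOf m μ (k + 1) ≤ phip (μ (k - 1)) := by
      rcases hk2.lt_or_eq with hlt | rfl
      · rw [lamOf_of_le (by omega) hlt]
        exact (phim_le _).trans (le_phip _)
      · rw [lamOf_of_lt (by omega) (by omega), show 2 ^ (m + 1) - (2 ^ m + 1) = 2 ^ m - 1 by omega]
    rw [lamOf_of_le (by omega) hk2] at hy
    exact lt_f_of_mem_Ioo (hμ.le_25_div_4 hj) ⟨hy.1, hy.2.trans_le hup⟩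
  · intro h
    rw [lamOf_of_le (k := k + 1) (by omega) (by omega), Nat.add_sub_cancel] at hy
    rw [Nat.sub_add_cancel hk1]
    exact f_lt_of_lt_phim (hμ.le_25_div_4 ⟨hk1, by omega⟩) hy.2

lemma f_mem_gap_of_ge {k : ℕ} (hk : 2 ^ m ≤ k) (hk' : k ≤ 2 ^ (m + 1) - 1) {y : ℝ}
    (hy : y ∈ Ioo (lamOf m μ k) (lamOf m μ (k + 1))) :
    f y ∈ gap μ (2 ^ m - 1) (2 ^ (m + 1) - 1 - k) := by
  have hpow : 2 ^ (m + 1) = 2 * 2 ^ m := pow_succ' 2 m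
  have hpos := Nat.one_le_two_pow (n := m)
  constructor
  · intro h
    have hj : 2 ^ (m + 1) - 1 - k ∈ Icc 1 (2 ^ m - 1) := ⟨h, by omega⟩
    have hlow : phim (μ (2 ^ (m + 1) - 1 - k)) ≤ lamOf m μ k := by
      rcases Nat.eq_or_lt_of_le hk with rfl | hlt
      · rw [lamOf_of_le (by omega) le_rfl, show 2 ^ (m + 1) - 1 - 2 ^ m = 2 ^ m - 1 by omega]
      · rw [lamOf_of_lt hlt (by omega)]
        exact (phim_le _).trans (le_phip _)
    rw [lamOf_of_lt (k := k + 1) (by omega) (by omega),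
      show 2 ^ (m + 1) - (k + 1) = 2 ^ (m + 1) - 1 - k by omega] at hy
    exact lt_f_of_mem_Ioo (hμ.le_25_div_4 hj) ⟨hlow.trans_lt hy.1, hy.2⟩
  · intro h
    rw [lamOf_of_lt (by omega) (by omega)] at hy
    rw [show 2 ^ (m + 1) - 1 - k + 1 = 2 ^ (m + 1) - k by omega]
    exact f_lt_of_phip_lt (hμ.le_25_div_4 ⟨by omega, by omega⟩) hy.1

theorem exists_succ : ∃ μ' : ℕ → ℝ, RootPattern (m + 1) μ' ∧
    ∀ k ∈ Icc 1 (2 ^ (m + 1) - 1), μ' k ∈ Ioo (lamOf m μ k) (lamOf m μ (k + 1)) := by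
  have hpow : 2 ^ (m + 1) = 2 * 2 ^ m := pow_succ' 2 m
  have hpos := Nat.one_le_two_pow (n := m)
  obtain ⟨μ', hinter, hmono, hroots, hgap⟩ := exists_interlacing_roots (x := lamOf m μ)
    (natDegree_Hp_succ_le (m + 1)) (fun k hk => hμ.lamOf_lt_lamOf_succ hk)
    (fun k hk => hμ.sign_eval_lamOf ⟨hk.1, by have := hk.2; omega⟩)
  refine ⟨μ', ⟨hmono, fun k hk => ?_, hroots, hgap, fun k hk => ?_⟩, hinter⟩
  · obtain ⟨hk1, hk2⟩ := hk
    exact ⟨(hμ.lamOf_mem_Icc ⟨hk1, by omega⟩).1.trans_lt (hinter k ⟨hk1, hk2⟩).1,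
      (hinter k ⟨hk1, hk2⟩).2.trans_le (hμ.lamOf_mem_Icc ⟨by omega, by omega⟩).2⟩
  · obtain ⟨hk1, hk2⟩ := hk
    rcases Nat.lt_or_ge k (2 ^ m) with hlow | hhigh
    · exact hμ.sign_gap (k - 1) (by omega) _
        (hμ.f_mem_gap_of_le ⟨hk1, hlow.le⟩ (hinter k ⟨hk1, hk2⟩))
    · have hsign : (-1 : ℝ) ^ (k - 1) = (-1) ^ (2 ^ (m + 1) - 1 - k) :=
        neg_one_pow_congr (by simp only [Nat.even_iff]; omega)
      rw [hsign]
      exact hμ.sign_gap _ (by omega) _ (hμ.f_mem_gap_of_ge hhigh (by omega) (hinter k ⟨hk1, hk2⟩))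

section Interlacing

variable {μ' : ℕ → ℝ}
  (hinter : ∀ k ∈ Icc 1 (2 ^ (m + 1) - 1), μ' k ∈ Ioo (lamOf m μ k) (lamOf m μ (k + 1)))
include hinter

lemma phim_lamOf_lt_lamOf_succ {k : ℕ} (hk : 2 ≤ k) (hk' : k ≤ 2 ^ (m + 1)) :
    phim (lamOf m μ (k - 1)) < lamOf (m + 1) μ' k ∧ lamOf (m + 1) μ' k < phim (lamOf m μ k) := by
  have hbetween := hinter (k - 1) ⟨by omega, by omega⟩
  rw [Nat.sub_add_cancel (by omega)] at hbetween
  have hle : lamOf m μ k ≤ 25 / 4 := (hμ.lamOf_mem_Icc ⟨by omega, hk'⟩).2.trans (by norm_num)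
  rw [lamOf_of_le (μ := μ') hk hk']
  exact ⟨phim_lt_phim hbetween.1 (hbetween.2.le.trans hle), phim_lt_phim hbetween.2 hle⟩

lemma phip_lamOf_lt_lamOf_succ {k : ℕ} (hk : 2 ^ (m + 1) + 1 ≤ k) (hk' : k ≤ 2 ^ (m + 2) - 1) :
    phip (lamOf m μ (2 ^ (m + 2) - k + 1)) < lamOf (m + 1) μ' k ∧
      lamOf (m + 1) μ' k < phip (lamOf m μ (2 ^ (m + 2) - k)) := by
  have hpow : 2 ^ (m + 2) = 2 * 2 ^ (m + 1) := pow_succ' 2 (m + 1)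
  have hbetween := hinter (2 ^ (m + 2) - k) ⟨by omega, by omega⟩
  have hle : lamOf m μ (2 ^ (m + 2) - k + 1) ≤ 25 / 4 :=
    (hμ.lamOf_mem_Icc ⟨by omega, by omega⟩).2.trans (by norm_num)
  rw [lamOf_of_lt (μ := μ') (by omega) (by omega)]
  exact ⟨phip_lt_phip hbetween.2 hle, phip_lt_phip hbetween.1 (hbetween.2.le.trans hle)⟩

end Interlacing

end RootPattern

lemma exists_rootPattern (m : ℕ) : ∃ μ, RootPattern m μ := by
  induction m with
  | zero => exact ⟨0, rootPattern_zero 0⟩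
  | succ m ih =>
    obtain ⟨μ, hμ⟩ := ih
    obtain ⟨μ', hμ', -⟩ := hμ.exists_succ
    exact ⟨μ', hμ'⟩

theorem statement_19 (m : ℕ) (hm : 1 ≤ m) (P P' : ℝ[X])
    (hP : P * DpN m = QpN m) (hP' : P' * DpN (m + 1) = QpN (m + 1)) :
    ∃ lam lam' : ℕ → ℝ,
      StrictMonoOn lam (Set.Icc 1 (2 ^ m)) ∧
      (∀ x : ℝ, P.eval x = 0 ↔ ∃ k : ℕ, 1 ≤ k ∧ k ≤ 2 ^ m ∧ lam k = x) ∧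
      lam 1 = 0 ∧ lam (2 ^ m - 1) < 5 ∧ lam (2 ^ m) = 6 ∧
      StrictMonoOn lam' (Set.Icc 1 (2 ^ (m + 1))) ∧
      (∀ x : ℝ, P'.eval x = 0 ↔ ∃ k : ℕ, 1 ≤ k ∧ k ≤ 2 ^ (m + 1) ∧ lam' k = x) ∧
      lam' 1 = 0 ∧ lam' (2 ^ (m + 1) - 1) < 5 ∧ lam' (2 ^ (m + 1)) = 6 ∧
      (∀ k : ℕ, 2 ≤ k → k ≤ 2 ^ m →
        phim (lam (k - 1)) < lam' k ∧ lam' k < phim (lam k)) ∧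
      (∀ k : ℕ, 2 ^ m + 1 ≤ k → k ≤ 2 ^ (m + 1) - 1 →
        phip (lam (2 ^ (m + 1) - k + 1)) < lam' k ∧ lam' k < phip (lam (2 ^ (m + 1) - k))) := by
  obtain ⟨n, rfl⟩ := Nat.exists_eq_add_of_le' hm
  obtain ⟨μ, hμ⟩ := exists_rootPattern n
  obtain ⟨μ', hμ', hinter⟩ := hμ.exists_succ
  refine ⟨lamOf n μ, lamOf (n + 1) μ', hμ.strictMonoOn_lamOf, fun x => ?_, lamOf_one,
    hμ.lamOf_two_pow_succ_sub_one_lt_five, lamOf_two_pow_succ, hμ'.strictMonoOn_lamOf,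
    fun x => ?_, lamOf_one, hμ'.lamOf_two_pow_succ_sub_one_lt_five, lamOf_two_pow_succ,
    fun k => hμ.phim_lamOf_lt_lamOf_succ hinter, fun k => hμ.phip_lamOf_lt_lamOf_succ hinter⟩
  · simpa [eval_of_mul_DpN hm hP, and_assoc] using hμ.eval_eq_zero_iff_lamOf x
  · simpa [eval_of_mul_DpN (by omega) hP', and_assoc] using hμ'.eval_eq_zero_iff_lamOf x
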